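/- arXiv:1710.10798 — 4 statements merged into one kernel-verified Lean document; each statement's English description precedes it below -/
import Mathlib

section
/- Equality in the concavity inequality for weighted entropy, h^w_φ(λ₁f₁ + λ₂f₂) = λ₁ h^w_φ(f₁) + λ₂ h^w_φ(f₂) with λ₁, λ₂ ∈ (0,1), λ₁ + λ₂ = 1, holds if and only if φ(x)[f₁(x) − f₂(x)] = 0 for (λ₁f₁ + λ₂f₂)-almost all x. -/
open MeasureTheory Real

lemma mul_log_convex_aux {a b l₁ l₂ : ℝ} (hl₁ : 0 < l₁) (hl₂ : 0 < l₂)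
    (hl : l₁ + l₂ = 1) (ha : 0 ≤ a) (hb : 0 ≤ b) :
    (l₁ * a + l₂ * b) * Real.log (l₁ * a + l₂ * b)
      ≤ l₁ * (a * Real.log a) + l₂ * (b * Real.log b) := by
  simpa using Real.convexOn_mul_log.2 ha hb hl₁.le hl₂.le hl

lemma mul_log_strict_aux {a b l₁ l₂ : ℝ} (hl₁ : 0 < l₁) (hl₂ : 0 < l₂)
    (hl : l₁ + l₂ = 1) (ha : 0 ≤ a) (hb : 0 ≤ b) (hab : a ≠ b) :
    (l₁ * a + l₂ * b) * Real.log (l₁ * a + l₂ * b)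
      < l₁ * (a * Real.log a) + l₂ * (b * Real.log b) := by
  simpa using Real.strictConvexOn_mul_log.2 ha hb hab hl₁ hl₂ hl

/-- Equality case in the concavity of the weighted entropy: for `λ₁, λ₂ ∈ (0,1)`,
equality holds iff `φ·(f₁ − f₂) = 0` for `(λ₁f₁+λ₂f₂)`-almost all `x`. -/
theorem weighted_entropy_concave_equality {X : Type*} [MeasurableSpace X] (μ : Measure X)
    [SigmaFinite μ] (f₁ f₂ φ : X → ℝ) (l₁ l₂ : ℝ)
    (hf₁_meas : Measurable f₁) (hf₂_meas : Measurable f₂) (hφ_meas : Measurable φ)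
    (hf₁_nonneg : ∀ x, 0 ≤ f₁ x) (hf₂_nonneg : ∀ x, 0 ≤ f₂ x) (hφ_nonneg : ∀ x, 0 ≤ φ x)
    (hf₁_prob : ∫ x, f₁ x ∂μ = 1) (hf₂_prob : ∫ x, f₂ x ∂μ = 1)
    (hl₁ : 0 < l₁) (hl₁' : l₁ < 1) (hl₂ : 0 < l₂) (hl₂' : l₂ < 1) (hl : l₁ + l₂ = 1)
    (hint₁ : Integrable (fun x => φ x * f₁ x * Real.log (f₁ x)) μ)
    (hint₂ : Integrable (fun x => φ x * f₂ x * Real.log (f₂ x)) μ)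
    (hint : Integrable
      (fun x => φ x * (l₁ * f₁ x + l₂ * f₂ x) * Real.log (l₁ * f₁ x + l₂ * f₂ x)) μ) :
    (-∫ x, φ x * (l₁ * f₁ x + l₂ * f₂ x) * Real.log (l₁ * f₁ x + l₂ * f₂ x) ∂μ
        = l₁ * (-∫ x, φ x * f₁ x * Real.log (f₁ x) ∂μ)
          + l₂ * (-∫ x, φ x * f₂ x * Real.log (f₂ x) ∂μ)
      ↔ ∀ᵐ x ∂(μ.withDensity (fun x => ENNReal.ofReal (l₁ * f₁ x + l₂ * f₂ x))),
          φ x * (f₁ x - f₂ x) = 0) := by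
  set D : X → ℝ := fun x =>
    l₁ * (φ x * f₁ x * Real.log (f₁ x)) + l₂ * (φ x * f₂ x * Real.log (f₂ x))
      - φ x * (l₁ * f₁ x + l₂ * f₂ x) * Real.log (l₁ * f₁ x + l₂ * f₂ x) with hD
  have hDnonneg : ∀ x, 0 ≤ D x := by
    intro x
    have h := mul_log_convex_aux hl₁ hl₂ hl (hf₁_nonneg x) (hf₂_nonneg x)
    have := mul_le_mul_of_nonneg_left h (hφ_nonneg x)
    simp only [hD]
    nlinarith
  have hDint : Integrable D μ := ((hint₁.const_mul l₁).add (hint₂.const_mul l₂)).sub hint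
  -- pointwise characterization of `D x = 0`
  have hpt : ∀ x, (D x = 0 ↔
      ((fun x => ENNReal.ofReal (l₁ * f₁ x + l₂ * f₂ x)) x ≠ 0 → φ x * (f₁ x - f₂ x) = 0)) := by
    intro x
    simp only [ne_eq, ENNReal.ofReal_eq_zero, not_le]
    constructor
    · intro hD0 hg
      by_contra hne
      have hφpos : 0 < φ x := lt_of_le_of_ne (hφ_nonneg x)
        (fun h => hne (by rw [← h]; ring))
      have hab : f₁ x ≠ f₂ x := by
        intro h; exact hne (by rw [h]; ring)
      have hstrict := mul_log_strict_aux hl₁ hl₂ hl (hf₁_nonneg x) (hf₂_nonneg x) hab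
      have := mul_lt_mul_of_pos_left hstrict hφpos
      simp only [hD] at hD0
      nlinarith
    · intro h
      rcases le_or_gt (l₁ * f₁ x + l₂ * f₂ x) 0 with hg | hg
      · -- then f₁ x = f₂ x = 0
        have h1 : f₁ x = 0 := by nlinarith [hf₁_nonneg x, hf₂_nonneg x]
        have h2 : f₂ x = 0 := by nlinarith [hf₁_nonneg x, hf₂_nonneg x]
        simp [hD, h1, h2]
      · have hφf := h hg
        rcases mul_eq_zero.1 hφf with hφ0 | hsub
        · simp [hD, hφ0]
        · have hab : f₁ x = f₂ x := by linarith [sub_eq_zero.1 hsub]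
          simp only [hD, hab]
          have : l₁ * f₂ x + l₂ * f₂ x = f₂ x := by rw [← add_mul, hl, one_mul]
          rw [this]; linear_combination (φ x * f₂ x * Real.log (f₂ x)) * hl
  -- the equality of entropies is equivalent to `∫ D = 0`
  have hInt : ∫ x, D x ∂μ
      = l₁ * (∫ x, φ x * f₁ x * Real.log (f₁ x) ∂μ)
        + l₂ * (∫ x, φ x * f₂ x * Real.log (f₂ x) ∂μ)
        - ∫ x, φ x * (l₁ * f₁ x + l₂ * f₂ x) * Real.log (l₁ * f₁ x + l₂ * f₂ x) ∂μ := by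
    have h1 : Integrable (fun x => l₁ * (φ x * f₁ x * Real.log (f₁ x))
        + l₂ * (φ x * f₂ x * Real.log (f₂ x))) μ := by
      exact (hint₁.const_mul l₁).add (hint₂.const_mul l₂)
    rw [hD]
    rw [integral_sub h1 hint,
      integral_add (hint₁.const_mul l₁) (hint₂.const_mul l₂),
      integral_const_mul, integral_const_mul]
  have hmeas : Measurable fun x => ENNReal.ofReal (l₁ * f₁ x + l₂ * f₂ x) :=
    (((hf₁_meas.const_mul l₁).add (hf₂_meas.const_mul l₂)).ennreal_ofReal)
  rw [ae_withDensity_iff hmeas]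
  constructor
  · intro heq
    have h0 : ∫ x, D x ∂μ = 0 := by rw [hInt]; linarith
    have hae := (integral_eq_zero_iff_of_nonneg hDnonneg hDint).1 h0
    filter_upwards [hae] with x hx
    exact (hpt x).1 hx
  · intro hae
    have hae' : D =ᵐ[μ] 0 := by
      filter_upwards [hae] with x hx
      exact (hpt x).2 hx
    have h0 : ∫ x, D x ∂μ = 0 := by
      rw [integral_congr_ae hae']; simp
    rw [hInt] at h0; linarith
end

section
/- Weighted entropy power inequality: let X₁, X₂ be independent real random variables with densities f₁, f₂, X = X₁ + X₂, and φ ≥ 0 a weight function. Define κ = exp(2h^w_φ(X₁)/E[φ(X₁)]) + exp(2h^w_φ(X₂)/E[φ(X₂)]), α = arctan[exp(h^w_φ(X₂)/E[φ(X₂)] − h^w_φ(X₁)/E[φ(X₁)])], Y₁ = X₁/cos α, Y₂ = X₂/sin α. Assume (i) E[φ(Xᵢ)] ≥ E[φ(X)] for i=1,2 if κ ≥ 1, and E[φ(Xᵢ)] ≤ E[φ(X)] if κ ≤ 1; and (ii) the weighted Lieb splitting inequality cos²α · h^w_{φ_c}(Y₁) + sin²α · h^w_{φ_s}(Y₂)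 ≤ h^w_φ(X), where φ_c(x) = φ(x cos α), φ_s(x) = φ(x sin α). Then κ ≤ exp(2h^w_φ(X)/E[φ(X)]). -/
open MeasureTheory Real

/-- Weighted entropy power inequality (WEPI): under the weighted Lieb splitting
inequality (ii) and the comparison condition (i) on `E[φ(Xᵢ)]` and `E[φ(X)]`,
`κ = exp(2h^w_φ(X₁)/E φ(X₁)) + exp(2h^w_φ(X₂)/E φ(X₂)) ≤ exp(2h^w_φ(X)/E φ(X))`,
where `X = X₁ + X₂` has the convolution density `f`. -/
theorem weighted_entropy_power_inequality (f₁ f₂ f φ : ℝ → ℝ)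
    (hf₁_meas : Measurable f₁) (hf₂_meas : Measurable f₂) (hφ_meas : Measurable φ)
    (hf₁_nonneg : ∀ x, 0 ≤ f₁ x) (hf₂_nonneg : ∀ x, 0 ≤ f₂ x) (hφ_nonneg : ∀ x, 0 ≤ φ x)
    (hf₁_prob : ∫ x, f₁ x = 1) (hf₂_prob : ∫ x, f₂ x = 1)
    (hf_conv : ∀ x, f x = ∫ y, f₁ y * f₂ (x - y))
    (e₁ e₂ e h₁ h₂ h κ a : ℝ)
    (he₁ : e₁ = ∫ x, φ x * f₁ x) (he₂ : e₂ = ∫ x, φ x * f₂ x) (he : e = ∫ x, φ x * f x)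
    (he₁_pos : 0 < e₁) (he₂_pos : 0 < e₂) (he_pos : 0 < e)
    (hh₁ : h₁ = -∫ x, φ x * f₁ x * Real.log (f₁ x))
    (hh₂ : h₂ = -∫ x, φ x * f₂ x * Real.log (f₂ x))
    (hh : h = -∫ x, φ x * f x * Real.log (f x))
    (hint₁ : Integrable (fun x => φ x * f₁ x * Real.log (f₁ x)))
    (hint₂ : Integrable (fun x => φ x * f₂ x * Real.log (f₂ x)))
    (hint : Integrable (fun x => φ x * f x * Real.log (f x)))
    (hκ : κ = Real.exp (2 * h₁ / e₁) + Real.exp (2 * h₂ / e₂))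
    (ha : a = Real.arctan (Real.exp (h₂ / e₂ - h₁ / e₁)))
    -- condition (i)
    (hcond₁ : 1 ≤ κ → e ≤ e₁ ∧ e ≤ e₂)
    (hcond₂ : κ ≤ 1 → e₁ ≤ e ∧ e₂ ≤ e)
    -- condition (ii): the weighted Lieb splitting inequality, where
    -- `Y₁ = X₁/cos a` has density `y ↦ cos a · f₁(y cos a)` and
    -- `Y₂ = X₂/sin a` has density `y ↦ sin a · f₂(y sin a)`
    (hWLSI : (Real.cos a) ^ 2 *
        (-∫ y, φ (y * Real.cos a) * (Real.cos a * f₁ (y * Real.cos a)) *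
          Real.log (Real.cos a * f₁ (y * Real.cos a)))
      + (Real.sin a) ^ 2 *
        (-∫ y, φ (y * Real.sin a) * (Real.sin a * f₂ (y * Real.sin a)) *
          Real.log (Real.sin a * f₂ (y * Real.sin a))) ≤ h) :
    κ ≤ Real.exp (2 * h / e) := by
  -- basic positivity
  have ht : (0:ℝ) < Real.exp (h₂ / e₂ - h₁ / e₁) := Real.exp_pos _
  set t := Real.exp (h₂ / e₂ - h₁ / e₁) with htdef
  have hroot : (0:ℝ) < Real.sqrt (1 + t ^ 2) := Real.sqrt_pos.2 (by positivity)
  have hc : Real.cos a = 1 / Real.sqrt (1 + t ^ 2) := by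
    rw [ha, Real.cos_arctan]
  have hs : Real.sin a = t / Real.sqrt (1 + t ^ 2) := by
    rw [ha, Real.sin_arctan]
  have hc_pos : 0 < Real.cos a := by rw [hc]; positivity
  have hs_pos : 0 < Real.sin a := by rw [hs]; positivity
  set c := Real.cos a
  set s := Real.sin a
  have hcs : s ^ 2 + c ^ 2 = 1 := Real.sin_sq_add_cos_sq a
  have hκ_pos : 0 < κ := by rw [hκ]; positivity
  -- log of c and s in terms of κ
  have hκ' : κ = Real.exp (2 * h₁ / e₁) * (1 + t ^ 2) := by
    have : t ^ 2 = Real.exp (2 * h₂ / e₂ - 2 * h₁ / e₁) := by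
      rw [htdef, ← Real.exp_nat_mul]
      congr 1; field_simp; ring
    rw [hκ, this, mul_add, mul_one, ← Real.exp_add]
    ring_nf
  have hlogκ : Real.log κ = 2 * h₁ / e₁ + Real.log (1 + t ^ 2) := by
    rw [hκ', Real.log_mul (Real.exp_ne_zero _) (by positivity), Real.log_exp]
  have hlogc : Real.log c = h₁ / e₁ - Real.log κ / 2 := by
    rw [hc, hlogκ, one_div, Real.log_inv, Real.log_sqrt (by positivity)]
    ring
  have hlogs : Real.log s = h₂ / e₂ - Real.log κ / 2 := by
    have : s = t * c := by rw [hs, hc]; ring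
    rw [this, Real.log_mul ht.ne' hc_pos.ne', hlogc, htdef, Real.log_exp]
    ring
  clear_value t c s
  -- integrability of φ * fᵢ
  have hI₁ : Integrable (fun x => φ x * f₁ x) := by
    by_contra hni
    rw [MeasureTheory.integral_undef hni] at he₁
    linarith
  have hI₂ : Integrable (fun x => φ x * f₂ x) := by
    by_contra hni
    rw [MeasureTheory.integral_undef hni] at he₂
    linarith
  -- key computation: the dilated weighted entropies
  have key : ∀ (g : ℝ → ℝ) (b E H : ℝ), (∀ x, 0 ≤ g x) → 0 < b →
      Integrable (fun x => φ x * g x) → Integrable (fun x => φ x * g x * Real.log (g x)) →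
      E = ∫ x, φ x * g x → H = -∫ x, φ x * g x * Real.log (g x) →
      (-∫ y, φ (y * b) * (b * g (y * b)) * Real.log (b * g (y * b))) = H - E * Real.log b := by
    intro g b E H hg_nonneg hb hIg hIgl hE hH
    have hcomp := MeasureTheory.Measure.integral_comp_mul_right
      (fun x => φ x * (b * g x) * Real.log (b * g x)) b
    rw [hcomp, abs_of_pos (inv_pos.2 hb), smul_eq_mul]
    have hpt : ∀ x, φ x * (b * g x) * Real.log (b * g x)
        = b * (φ x * g x * Real.log b + φ x * g x * Real.log (g x)) := by
      intro x
      rcases eq_or_lt_of_le (hg_nonneg x) with h0 | h0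
      · simp [← h0]
      · rw [Real.log_mul hb.ne' h0.ne']; ring
    have : (∫ x, φ x * (b * g x) * Real.log (b * g x))
        = b * ((∫ x, φ x * g x) * Real.log b + ∫ x, φ x * g x * Real.log (g x)) := by
      simp_rw [hpt]
      rw [MeasureTheory.integral_const_mul,
        MeasureTheory.integral_add (hIg.mul_const _) hIgl,
        MeasureTheory.integral_mul_const _ _]
    rw [this, hE, hH]
    field_simp
    ring
  have k1 := key f₁ c e₁ h₁ hf₁_nonneg hc_pos hI₁ hint₁ he₁ hh₁
  have k2 := key f₂ s e₂ h₂ hf₂_nonneg hs_pos hI₂ hint₂ he₂ hh₂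
  rw [k1, k2, hlogc, hlogs] at hWLSI
  -- hWLSI now: c²(h₁ - e₁(h₁/e₁ - logκ/2)) + s²(h₂ - e₂(h₂/e₂ - logκ/2)) ≤ h
  have hmain : Real.log κ / 2 * (c ^ 2 * e₁ + s ^ 2 * e₂) ≤ h := by
    have h1 : e₁ * (h₁ / e₁) = h₁ := by field_simp
    have h2 : e₂ * (h₂ / e₂) = h₂ := by field_simp
    nlinarith [hWLSI]
  -- conclude
  rw [← Real.exp_log hκ_pos, Real.exp_le_exp]
  have goal2 : e * Real.log κ / 2 ≤ h → Real.log κ ≤ 2 * h / e := by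
    intro hg
    rw [le_div_iff₀ he_pos]
    linarith
  apply goal2
  have expand : e * Real.log κ / 2
      = Real.log κ / 2 * (c ^ 2 * e + s ^ 2 * e) := by
    have h1 : c ^ 2 * e + s ^ 2 * e = (s ^ 2 + c ^ 2) * e := by ring
    rw [h1, hcs, one_mul]; ring
  rcases le_total 1 κ with hκ1 | hκ1
  · obtain ⟨hE1, hE2⟩ := hcond₁ hκ1
    have hlκ : 0 ≤ Real.log κ := Real.log_nonneg hκ1
    have step := mul_le_mul_of_nonneg_left
      (add_le_add (mul_le_mul_of_nonneg_left hE1 (sq_nonneg c))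
        (mul_le_mul_of_nonneg_left hE2 (sq_nonneg s)))
      (div_nonneg hlκ (by norm_num : (0:ℝ) ≤ 2))
    linarith [hmain, expand, step]
  · obtain ⟨hE1, hE2⟩ := hcond₂ hκ1
    have hlκ : Real.log κ ≤ 0 := Real.log_nonpos hκ_pos.le hκ1
    have step := mul_le_mul_of_nonpos_left
      (add_le_add (mul_le_mul_of_nonneg_left hE1 (sq_nonneg c))
        (mul_le_mul_of_nonneg_left hE2 (sq_nonneg s)))
      (div_nonpos_of_nonpos_of_nonneg hlκ (by norm_num : (0:ℝ) ≤ 2))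
    linarith [hmain, expand, step]
end

section
/- WE rate for IID process with additive weight: if X₀, X₁, … are IID with probability mass function p on a finite set and φ_n(x₀,…,x_{n−1}) = Σ_{j=0}^{n−1} ψ(x_j), then the weighted entropy h^w_{φ_n}(p_n) = −E[φ_n(X₀^{n−1}) log p_n(X₀^{n−1})] equals n(n−1)·S(p)·E[ψ(X)] + n·H^w_ψ(p), where S(p) = −E[log p(X)] and H^w_ψ(p) = −E[ψ(X) log p(X)]. -/
/-!
Expanding `log p_n(x) = Σ_k log p(x_k)` writes the weighted entropy as
`-Σ_{j,k} E[ψ(X_j) log p(X_k)]`. The `n` diagonal terms equal `E[ψ(X) log p(X)]`, and by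
independence of the coordinates each of the `n(n-1)` off-diagonal terms factors as
`E[ψ(X)] · E[log p(X)]`.
-/

open Real

section ProductMeasure

variable {ι A R : Type*} [Fintype ι] [DecidableEq ι] [Fintype A] [CommSemiring R] (p : A → R)

theorem sum_pi_prod_mul_prod (f : ι → A → R) :
    ∑ x : ι → A, (∏ i, p (x i)) * ∏ i, f i (x i) = ∏ i, ∑ a, p a * f i a := by
  simp_rw [← Finset.prod_mul_distrib]
  exact (Fintype.prod_sum (fun i a => p a * f i a)).symm

variable {p}

theorem sum_pi_prod_mul_apply (hp : ∑ a, p a = 1) (g : A → R) (j : ι) :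
    ∑ x : ι → A, (∏ i, p (x i)) * g (x j) = ∑ a, p a * g a := by
  have h := sum_pi_prod_mul_prod p fun i a => if i = j then g a else 1
  simp only [Finset.prod_ite_eq', Finset.mem_univ, if_true] at h
  rw [h, Fintype.prod_eq_single j fun i hi => by simp [hi, hp]]
  simp

theorem sum_pi_prod_mul_apply_mul_apply (hp : ∑ a, p a = 1) (g h : A → R) (j k : ι) :
    ∑ x : ι → A, (∏ i, p (x i)) * (g (x j) * h (x k))
      = if j = k then ∑ a, p a * (g a * h a) else (∑ a, p a * g a) * ∑ a, p a * h a := by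
  split_ifs with hjk
  · subst hjk
    exact sum_pi_prod_mul_apply hp (fun a => g a * h a) j
  have H := sum_pi_prod_mul_prod p fun i a => if i = j then g a else if i = k then h a else 1
  have hlhs (x : ι → A) : ∏ i, (if i = j then g (x i) else if i = k then h (x i) else 1)
      = g (x j) * h (x k) := by
    rw [Fintype.prod_eq_mul j k hjk fun i hi => by simp [hi.1, hi.2]]
    simp [Ne.symm hjk]
  rw [Fintype.prod_eq_mul j k hjk fun i hi => by simp [hi.1, hi.2, hp]] at H
  simpa [hlhs, Ne.symm hjk] using H

end ProductMeasure

theorem Real.prod_mul_log_prod {ι : Type*} (s : Finset ι) (f : ι → ℝ) :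
    (∏ i ∈ s, f i) * log (∏ i ∈ s, f i) = ∑ i ∈ s, (∏ j ∈ s, f j) * log (f i) := by
  by_cases h : ∀ i ∈ s, f i ≠ 0
  · rw [log_prod h, Finset.mul_sum]
  · push Not at h
    obtain ⟨i, hi, hfi⟩ := h
    simp [Finset.prod_eq_zero hi hfi]

theorem Fintype.sum_sum_ite_eq {ι R : Type*} [Fintype ι] [DecidableEq ι] [CommRing R]
    (d c : R) :
    ∑ j : ι, ∑ k : ι, (if j = k then d else c)
      = Fintype.card ι * d + Fintype.card ι * (Fintype.card ι - 1) * c := by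
  have hrow (j : ι) : ∑ k : ι, (if j = k then d else c) = d + (Fintype.card ι - 1) * c := by
    rw [← Finset.add_sum_erase _ _ (Finset.mem_univ j), if_pos rfl,
      Finset.sum_congr rfl fun k hk => if_neg (Finset.ne_of_mem_erase hk).symm]
    simp [Finset.card_erase_of_mem, Nat.cast_pred (Fintype.card_pos_iff.2 ⟨j⟩)]
  simp only [hrow, Finset.sum_const, Finset.card_univ, nsmul_eq_mul]
  ring

theorem weighted_entropy_iid_additive_general {A : Type*} [Fintype A]
    (p ψ : A → ℝ)
    (hp_prob : ∑ a, p a = 1) (n : ℕ) :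
    -∑ x : Fin n → A,
        (∑ j, ψ (x j)) * (∏ j, p (x j)) * Real.log (∏ j, p (x j))
      = (n : ℝ) * ((n : ℝ) - 1) * (-∑ a, p a * Real.log (p a)) * (∑ a, ψ a * p a)
        + (n : ℝ) * (-∑ a, ψ a * p a * Real.log (p a)) := by
  have hexpand (x : Fin n → A) :
      (∑ j, ψ (x j)) * (∏ j, p (x j)) * log (∏ j, p (x j))
        = ∑ j, ∑ k, (∏ i, p (x i)) * (ψ (x j) * log (p (x k))) := by
    rw [mul_assoc, prod_mul_log_prod, Finset.sum_mul_sum]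
    refine Finset.sum_congr rfl fun j _ => Finset.sum_congr rfl fun k _ => ?_
    ring
  simp_rw [hexpand]
  rw [Finset.sum_comm]
  conv_lhs => enter [1, 2, j]; rw [Finset.sum_comm]
  simp only [sum_pi_prod_mul_apply_mul_apply hp_prob ψ (fun a => log (p a)),
    Fintype.sum_sum_ite_eq, Fintype.card_fin]
  simp only [← mul_assoc, mul_comm (p _) (ψ _)]
  ring

/-- Weighted entropy of an IID string with additive weight function
`φ_n(x) = Σ_j ψ(x_j)`:
`h^w_{φ_n}(p_n) = n(n−1)·S(p)·E[ψ(X)] + n·H^w_ψ(p)`. -/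
theorem weighted_entropy_iid_additive {A : Type*} [Fintype A]
    (p ψ : A → ℝ) (hp_nonneg : ∀ a, 0 ≤ p a) (hψ_nonneg : ∀ a, 0 ≤ ψ a)
    (hp_prob : ∑ a, p a = 1) (n : ℕ) :
    -∑ x : Fin n → A,
        (∑ j, ψ (x j)) * (∏ j, p (x j)) * Real.log (∏ j, p (x j))
      = (n : ℝ) * ((n : ℝ) - 1) * (-∑ a, p a * Real.log (p a)) * (∑ a, ψ a * p a)
        + (n : ℝ) * (-∑ a, ψ a * p a * Real.log (p a)) :=
  weighted_entropy_iid_additive_general p ψ hp_prob n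
end

section
/- WE rate for IID process with multiplicative weight: if X₀, X₁, … are IID with probability mass function p on a finite set and φ_n(x₀,…,x_{n−1}) = ∏_{j=0}^{n−1} ψ(x_j), then h^w_{φ_n}(p_n) = n · H^w_ψ(p) · (E[ψ(X)])^{n−1}, where H^w_ψ(p) = −E[ψ(X) log p(X)]. -/
open Real

lemma aux_sum_prod {A : Type*} [Fintype A] (f : A → ℝ) (n : ℕ) :
    ∑ x : Fin n → A, ∏ j, f (x j) = (∑ a, f a) ^ n := by
  exact (Fintype.sum_pow f n).symm

lemma aux_mul_log (u v : ℝ) : u * v * Real.log (u * v)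
    = u * v * Real.log u + u * v * Real.log v := by
  rcases eq_or_ne u 0 with h | h; · simp [h]
  rcases eq_or_ne v 0 with h' | h'; · simp [h']
  rw [Real.log_mul h h']; ring

/-- Weighted entropy of an IID string with multiplicative weight function
`φ_n(x) = ∏_j ψ(x_j)`:
`h^w_{φ_n}(p_n) = n · H^w_ψ(p) · (E[ψ(X)])^{n−1}`. -/
theorem weighted_entropy_iid_multiplicative {A : Type*} [Fintype A]
    (p ψ : A → ℝ) (hp_nonneg : ∀ a, 0 ≤ p a) (hψ_nonneg : ∀ a, 0 ≤ ψ a)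
    (hp_prob : ∑ a, p a = 1) (n : ℕ) :
    -∑ x : Fin n → A,
        (∏ j, ψ (x j)) * (∏ j, p (x j)) * Real.log (∏ j, p (x j))
      = (n : ℝ) * (-∑ a, ψ a * p a * Real.log (p a)) * (∑ a, ψ a * p a) ^ (n - 1) := by
  induction n with
  | zero => simp
  | succ n ih =>
    rw [← Equiv.sum_comp (Fin.consEquiv fun _ : Fin (n+1) => A)]
    have key : ∀ (a : A) (x : Fin n → A),
        (∏ j, ψ ((Fin.cons a x : Fin (n+1) → A) j)) * (∏ j, p ((Fin.cons a x : Fin (n+1) → A) j)) *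
          Real.log (∏ j, p ((Fin.cons a x : Fin (n+1) → A) j))
        = (ψ a * p a * Real.log (p a)) * ∏ j, (ψ (x j) * p (x j))
          + (ψ a * p a) * ((∏ j, ψ (x j)) * (∏ j, p (x j)) *
              Real.log (∏ j, p (x j))) := by
      intro a x
      simp only [Fin.prod_univ_succ, Fin.cons_zero, Fin.cons_succ]
      have h := aux_mul_log (p a) (∏ j, p (x j))
      calc _ = ψ a * (∏ j, ψ (x j)) *
            (p a * (∏ j, p (x j)) * Real.log (p a * ∏ j, p (x j))) := by ring
        _ = ψ a * (∏ j, ψ (x j)) *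
            (p a * (∏ j, p (x j)) * Real.log (p a)
              + p a * (∏ j, p (x j)) * Real.log (∏ j, p (x j))) := by rw [h]
        _ = _ := by rw [Finset.prod_mul_distrib]; ring
    simp only [Fin.consEquiv_apply, Fintype.sum_prod_type]
    simp only [key, Finset.sum_add_distrib, ← Finset.sum_mul, ← Finset.mul_sum]
    rw [aux_sum_prod (fun a => ψ a * p a) n]
    have hIH : ∑ x : Fin n → A,
        (∏ j, ψ (x j)) * (∏ j, p (x j)) * Real.log (∏ j, p (x j))
        = -(((n : ℝ) * -∑ a, ψ a * p a * Real.log (p a)) * (∑ a, ψ a * p a) ^ (n - 1)) := by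
      rw [← ih]; ring
    rw [hIH, Nat.add_sub_cancel]
    rcases Nat.eq_zero_or_pos n with h | h
    · subst h; simp
    · obtain ⟨m, rfl⟩ : ∃ m, n = m + 1 := ⟨n - 1, (Nat.succ_pred_eq_of_pos h).symm⟩
      simp only [Nat.add_sub_cancel, pow_succ]
      push_cast
      ring
end
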